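/- Let G(z) = D + z C (I_n - zA)^{-1} B with A stable, and let P be the controllability Gramian of {A,B}. Then for all z on the unit circle, G(z) G(z)* = z C (I_n - zA)^{-1} Γ1 + (D D* + C P C*) + Γ1* (z I_n - A*)^{-1} C*, where Γ1 = B D* + A P C*. -/

import Mathlib

/-!
Put `U = 1 - z • A`. On the unit circle `star z = z⁻¹`, so `Uᴴ = 1 - star z • Aᴴ`, and the Stein
equation `P - A P Aᴴ = B Bᴴ` splits as `B Bᴴ = U P Uᴴ + z • A P Uᴴ + star z • U P Aᴴ`. Hence
`U⁻¹ B Bᴴ U⁻ᴴ = P + z • U⁻¹ A P + star z • P Aᴴ U⁻ᴴ`, and substituting this into the expansion of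
`G z * (G z)ᴴ` gives the formula. Stability is used twice: `U` is invertible for `‖z‖ = 1`, and
`Aᵏ → 0`, so the Stein equation has a unique solution, which is therefore Hermitian.
-/

open Matrix Filter Topology

section BanachAlgebra

variable {A : Type*} [NormedRing A] [NormedAlgebra ℂ A]

theorem spectralRadius_lt_one_of_forall_norm_lt_one [CompleteSpace A] {a : A}
    (ha : ∀ μ ∈ spectrum ℂ a, ‖μ‖ < 1) : spectralRadius ℂ a < 1 := by
  rcases (spectrum ℂ a).eq_empty_or_nonempty with h | h
  · simp [spectralRadius, h]
  · simpa using spectrum.spectralRadius_lt_of_forall_lt_of_nonempty h (r := 1)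
      (by simpa [← NNReal.coe_lt_coe] using ha)

theorem tendsto_pow_atTop_nhds_zero_of_spectralRadius_lt_one [CompleteSpace A] {a : A}
    (ha : spectralRadius ℂ a < 1) : Tendsto (a ^ ·) atTop (𝓝 0) := by
  -- The power series `∑ zᵏ aᵏ` of `(1 - z • a)⁻¹` converges on the disc of radius
  -- `(spectralRadius ℂ a)⁻¹ > 1`, in particular at `z = 1`.
  obtain ⟨r, hr1, hr⟩ := ENNReal.lt_iff_exists_nnreal_btwn.mp (ENNReal.one_lt_inv.mpr ha)
  have hr0 : 0 < r := by exact_mod_cast zero_lt_one.trans hr1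
  have hps := (spectrum.hasFPowerSeriesOnBall_inverse_one_sub_smul ℂ a).exchange_radius
    ((spectrum.differentiableOn_inverse_one_sub_smul hr).hasFPowerSeriesOnBall hr0)
  have hsum := hps.hasSum (y := 1) (by simpa [edist_dist] using hr1)
  simpa using hsum.summable.tendsto_atTop_zero

end BanachAlgebra

theorem Matrix.tendsto_pow_atTop_nhds_zero_of_forall_norm_lt_one {n : Type*} [Fintype n]
    [DecidableEq n] {A : Matrix n n ℂ} (hA : ∀ μ ∈ spectrum ℂ A, ‖μ‖ < 1) :
    Tendsto (A ^ ·) atTop (𝓝 0) := by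
  let := Matrix.linftyOpNormedRing (n := n) (α := ℂ)
  let := Matrix.linftyOpNormedAlgebra (n := n) (R := ℂ) (α := ℂ)
  exact tendsto_pow_atTop_nhds_zero_of_spectralRadius_lt_one
    (spectralRadius_lt_one_of_forall_norm_lt_one hA)

theorem isUnit_one_sub_smul_of_forall_norm_lt_one {R : Type*} [Ring R] [Algebra ℂ R] {a : R}
    (ha : ∀ μ ∈ spectrum ℂ a, ‖μ‖ < 1) {z : ℂ} (hz : ‖z‖ ≤ 1) : IsUnit (1 - z • a) := by
  rcases eq_or_ne z 0 with rfl | hz0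
  · simp
  have hmem : z⁻¹ ∉ spectrum ℂ a := fun h =>
    (ha _ h).not_ge (by rw [norm_inv]; exact (one_le_inv₀ (norm_pos_iff.mpr hz0)).mpr hz)
  have hunit : IsUnit ((Units.mk0 z hz0)⁻¹ • (1 : R) - a) := by
    simpa [Units.smul_def, ← Algebra.algebraMap_eq_smul_one] using spectrum.notMem_iff.mp hmem
  simpa using (IsUnit.smul_sub_iff_sub_inv_smul _ a).mp hunit

theorem eq_zero_of_eq_mul_mul_of_tendsto_pow {R : Type*} [MonoidWithZero R] [TopologicalSpace R]
    [ContinuousMul R] [T2Space R] {a b x : R} (ha : Tendsto (a ^ ·) atTop (𝓝 0))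
    (hb : Tendsto (b ^ ·) atTop (𝓝 0)) (hx : x = a * x * b) : x = 0 := by
  have hpow : ∀ k : ℕ, a ^ k * x * b ^ k = x := by
    intro k
    induction k with
    | zero => simp
    | succ k ih =>
      calc a ^ (k + 1) * x * b ^ (k + 1) = a ^ k * (a * x * b) * b ^ k := by
            rw [pow_succ, pow_succ' b]; simp only [mul_assoc]
        _ = x := by rw [← hx, ih]
  have hlim : Tendsto (fun k : ℕ => a ^ k * x * b ^ k) atTop (𝓝 0) := by
    simpa using (ha.mul_const x).mul hb
  simp only [hpow] at hlim
  exact tendsto_nhds_unique tendsto_const_nhds hlim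

theorem IsSelfAdjoint.of_eq_mul_mul_star_add {R : Type*} [Ring R] [StarRing R] [TopologicalSpace R]
    [ContinuousMul R] [ContinuousStar R] [T2Space R] {a p q : R}
    (ha : Tendsto (a ^ ·) atTop (𝓝 0)) (hq : IsSelfAdjoint q) (hp : p = a * p * star a + q) :
    IsSelfAdjoint p := by
  have hstar_pow : Tendsto (star a ^ ·) atTop (𝓝 0) := by
    simpa [Function.comp_def, star_pow] using (continuous_star.tendsto 0).comp ha
  have hdiff : star p - p = a * (star p - p) * star a := by
    have hp' : star p = a * star p * star a + q := by
      conv_lhs => rw [hp]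
      simp [star_add, star_mul, hq.star_eq, mul_assoc]
    calc star p - p = (a * star p * star a + q) - (a * p * star a + q) := by rw [← hp', ← hp]
      _ = a * (star p - p) * star a := by noncomm_ring
  exact sub_eq_zero.mp (eq_zero_of_eq_mul_mul_of_tendsto_pow ha hstar_pow hdiff)

theorem stein_decomposition {K R : Type*} [CommRing K] [Ring R] [Algebra K R] {z w : K}
    (hzw : z * w = 1) {a a' p q : R} (hp : p = a * p * a' + q) :
    q = (1 - z • a) * p * (1 - w • a') + z • (a * p * (1 - w • a')) +
      w • ((1 - z • a) * p * a') := by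
  rw [eq_sub_of_add_eq' hp.symm]
  simp only [sub_mul, mul_sub, one_mul, mul_one, smul_mul_assoc, mul_smul_comm, smul_sub,
    smul_smul, mul_assoc]
  rw [mul_comm w z, hzw]
  module

theorem Matrix.resolvent_mul_mul_resolvent_of_stein {n K : Type*} [Fintype n] [DecidableEq n]
    [CommRing K] {z w : K} (hzw : z * w = 1) {A A' P Q : Matrix n n K}
    (hP : P = A * P * A' + Q) (hU : IsUnit (1 - z • A).det) (hV : IsUnit (1 - w • A').det) :
    (1 - z • A)⁻¹ * Q * (1 - w • A')⁻¹ =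
      P + z • ((1 - z • A)⁻¹ * A * P) + w • (P * A' * (1 - w • A')⁻¹) := by
  rw [stein_decomposition hzw hP]
  simp only [Matrix.mul_add, Matrix.add_mul, Matrix.mul_smul, Matrix.smul_mul, Matrix.mul_assoc,
    Matrix.nonsing_inv_mul_cancel_left _ _ hU, Matrix.mul_nonsing_inv _ hV, Matrix.mul_one]

theorem Matrix.add_smul_mul_conjTranspose {m n p K : Type*} [Fintype n] [Fintype p]
    [CommRing K] [StarRing K] {z : K} (hz : star z * z = 1) (D : Matrix m p K)
    (C : Matrix m n K) (M : Matrix n n K) (B : Matrix n p K) :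
    (D + z • (C * M * B)) * (D + z • (C * M * B))ᴴ =
      D * Dᴴ + z • (C * M * (B * Dᴴ)) + star z • (D * Bᴴ * Mᴴ * Cᴴ) +
        C * (M * (B * Bᴴ) * Mᴴ) * Cᴴ := by
  simp only [conjTranspose_add, conjTranspose_smul, conjTranspose_mul, Matrix.mul_add,
    Matrix.add_mul, Matrix.mul_smul, Matrix.smul_mul, smul_add, smul_smul, hz, one_smul,
    Matrix.mul_assoc]
  abel

theorem Matrix.inv_smul_one_sub {n K : Type*} [Fintype n] [DecidableEq n] [CommRing K] {z w : K}
    (hwz : w * z = 1) {M : Matrix n n K} (hM : IsUnit (1 - w • M).det) :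
    (z • (1 : Matrix n n K) - M)⁻¹ = w • (1 - w • M)⁻¹ := by
  have hsmul : z • (1 : Matrix n n K) - M = z • (1 - w • M) := by
    rw [smul_sub, smul_smul, mul_comm, hwz, one_smul]
  rw [hsmul]
  refine inv_eq_right_inv ?_
  rw [smul_mul_smul_comm, mul_comm, hwz, one_smul, mul_nonsing_inv _ hM]

/-- Let `G(z) = D + zC(I - zA)⁻¹B` with `A` stable and `P` the controllability Gramian of
`{A,B}`. Then for all `z` on the unit circle,
`G(z)G(z)ᴴ = z C (I - zA)⁻¹ Γ1 + (D Dᴴ + C P Cᴴ) + Γ1ᴴ (zI - Aᴴ)⁻¹ Cᴴ`,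
where `Γ1 = B Dᴴ + A P Cᴴ`. -/
theorem stmt5 {n m p : ℕ} (A : Matrix (Fin n) (Fin n) ℂ) (B : Matrix (Fin n) (Fin p) ℂ)
    (C : Matrix (Fin m) (Fin n) ℂ) (D : Matrix (Fin m) (Fin p) ℂ)
    (hA : ∀ μ ∈ spectrum ℂ A, ‖μ‖ < 1)
    (P : Matrix (Fin n) (Fin n) ℂ) (hP : P = A * P * Aᴴ + B * Bᴴ)
    (G : ℂ → Matrix (Fin m) (Fin p) ℂ)
    (hG : ∀ z : ℂ, G z = D + z • (C * (1 - z • A)⁻¹ * B))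
    (Γ1 : Matrix (Fin n) (Fin m) ℂ) (hΓ1 : Γ1 = B * Dᴴ + A * P * Cᴴ) :
    ∀ z : ℂ, ‖z‖ = 1 →
      G z * (G z)ᴴ =
        z • (C * (1 - z • A)⁻¹ * Γ1) + (D * Dᴴ + C * P * Cᴴ) +
          Γ1ᴴ * (z • (1 : Matrix (Fin n) (Fin n) ℂ) - Aᴴ)⁻¹ * Cᴴ := by
  intro z hz
  have hPH : Pᴴ = P :=
    (IsSelfAdjoint.of_eq_mul_mul_star_add (tendsto_pow_atTop_nhds_zero_of_forall_norm_lt_one hA)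
      (isHermitian_mul_conjTranspose_self B) hP).star_eq
  have hzz : star z * z = 1 := by simpa [hz] using Complex.conj_mul' z
  have hUH : (1 - z • A)ᴴ = 1 - star z • Aᴴ := by simp
  have hU : IsUnit (1 - z • A).det :=
    (isUnit_iff_isUnit_det _).mp (isUnit_one_sub_smul_of_forall_norm_lt_one hA hz.le)
  have hV : IsUnit (1 - star z • Aᴴ).det := by rwa [← hUH, det_conjTranspose, isUnit_star]
  have hsandwich := Matrix.resolvent_mul_mul_resolvent_of_stein (by rwa [mul_comm]) hP hU hV
  rw [hG, Matrix.add_smul_mul_conjTranspose hzz, conjTranspose_nonsing_inv, hUH, hsandwich, hΓ1,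
    Matrix.inv_smul_one_sub hzz hV]
  simp only [conjTranspose_add, conjTranspose_mul, hPH, conjTranspose_conjTranspose,
    Matrix.mul_add, Matrix.add_mul, Matrix.mul_smul, Matrix.smul_mul, smul_add, Matrix.mul_assoc]
  abel
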